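/- arXiv:2406.03059 — 6 statements merged into one kernel-verified Lean document; each statement's English description precedes it below -/
import Mathlib

section
/- Hierarchical objective lower bound: for rule sets R ⊆ R', the quantity b(R) = ℓ_p(R) + λ·|R| satisfies b(R) ≤ f(R'), where f(R') = ℓ_p(R') + ℓ_0(R') + λ·|R'|. In particular, if b(R) > θ then f(R') > θ for every superset R' of R. -/
open Finset

/-- Samples captured by a rule set: union of the coverage sets of its rules. -/
def captured {N M : ℕ} (C : Fin M → Finset (Fin N)) (R : Finset (Fin M)) : Finset (Fin N) :=
  R.biUnion C

/-- Positive-class (false-positive) loss: fraction of captured negatively-labeled samples. -/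
noncomputable def posLoss {N M : ℕ} (C : Fin M → Finset (Fin N)) (y : Fin N → Bool)
    (R : Finset (Fin M)) : ℝ :=
  (((captured C R).filter (fun n => y n = false)).card : ℝ) / N

/-- False-negative loss: fraction of uncaptured positively-labeled samples. -/
noncomputable def negLoss {N M : ℕ} (C : Fin M → Finset (Fin N)) (y : Fin N → Bool)
    (R : Finset (Fin M)) : ℝ :=
  ((Finset.univ.filter (fun n => n ∉ captured C R ∧ y n = true)).card : ℝ) / N

/-- Objective: losses plus complexity penalty. -/
noncomputable def objF {N M : ℕ} (C : Fin M → Finset (Fin N)) (y : Fin N → Bool) (lam : ℝ)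
    (R : Finset (Fin M)) : ℝ :=
  posLoss C y R + negLoss C y R + lam * R.card

/-- Branch-and-bound lower bound. -/
noncomputable def lbB {N M : ℕ} (C : Fin M → Finset (Fin N)) (y : Fin N → Bool) (lam : ℝ)
    (R : Finset (Fin M)) : ℝ :=
  posLoss C y R + lam * R.card


theorem hierarchical_objective_lower_bound {N M : ℕ} (C : Fin M → Finset (Fin N))
    (y : Fin N → Bool) (lam θ : ℝ) (hlam : 0 ≤ lam)
    (R R' : Finset (Fin M)) (h : R ⊆ R') :
    lbB C y lam R ≤ objF C y lam R' ∧
      (lbB C y lam R > θ → objF C y lam R' > θ) := by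
  have hmain : lbB C y lam R ≤ objF C y lam R' := by
    have hcap : captured C R ⊆ captured C R' := Finset.biUnion_subset_biUnion_of_subset_left C h
    have hpos : posLoss C y R ≤ posLoss C y R' := by
      unfold posLoss
      gcongr
    have hneg : 0 ≤ negLoss C y R' := by
      unfold negLoss
      positivity
    have hcard : lam * R.card ≤ lam * R'.card := by
      have := Finset.card_le_card h
      have : (R.card : ℝ) ≤ R'.card := by exact_mod_cast this
      nlinarith
    unfold lbB objF
    linarith
  exact ⟨hmain, fun hgt => lt_of_lt_of_le hgt hmain⟩
end

section
/- Look-ahead bound: if b(R) + λ > θ, then for every proper superset R' of R, the objective f(R') > θ. -/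
open Finset

theorem look_ahead_bound {N M : ℕ} (C : Fin M → Finset (Fin N))
    (y : Fin N → Bool) (lam θ : ℝ) (hlam : 0 ≤ lam)
    (R R' : Finset (Fin M)) (h : R ⊂ R')
    (hθ : lbB C y lam R + lam > θ) :
    objF C y lam R' > θ := by
  have hcap : captured C R ⊆ captured C R' :=
    Finset.biUnion_subset_biUnion_of_subset_left C h.subset
  have hN : (0:ℝ) ≤ (N:ℝ) := Nat.cast_nonneg N
  have hpos : posLoss C y R ≤ posLoss C y R' := by
    unfold posLoss
    rcases Nat.eq_zero_or_pos N with h0 | h0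
    · simp [h0]
    · gcongr
  have hneg : 0 ≤ negLoss C y R' := by
    unfold negLoss; positivity
  have hcard : (R.card : ℝ) + 1 ≤ R'.card := by
    exact_mod_cast Finset.card_lt_card h
  unfold objF
  unfold lbB at hθ
  nlinarith
end

section
/- Rule set size bound: let λ > 0 and let R ⊆ R' be rule sets; if |R'| > (θ - ℓ_p(R))/λ, then f(R') > θ. -/
open Finset

theorem rule_set_size_bound {N M : ℕ} (C : Fin M → Finset (Fin N))
    (y : Fin N → Bool) (lam θ : ℝ) (hlam : 0 < lam)
    (R R' : Finset (Fin M)) (h : R ⊆ R')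
    (hcard : ((R'.card : ℝ)) > (θ - posLoss C y R) / lam) :
    objF C y lam R' > θ := by
  have hmono : posLoss C y R ≤ posLoss C y R' := by
    unfold posLoss
    gcongr
    exact Finset.biUnion_subset_biUnion_of_subset_left _ h
  have hneg : 0 ≤ negLoss C y R' := by unfold negLoss; positivity
  have hlt : θ < lam * R'.card + posLoss C y R := by
    have := (div_lt_iff₀ hlam).mp hcard
    linarith
  unfold objF
  nlinarith
end

section
/- Correctness of EnsMinNonViolation (part 1): given a parity constraint system A x = b over GF(2) with A in reduced row echelon form, a rule set R of free rules all with index ≤ j_max, for each row i with residual r_i = b_i - A_i · 1_R = 1 and boundary B_A[i] ≤ j_max, the pivot rule of row i must belong to every solution extending R using only rules with index > j_max among free rules; i.e., the pivot rules returned are necessary. -/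
open Finset

/-- GF(2) indicator vector of a rule set. -/
def ind {M : ℕ} (R : Finset (Fin M)) : Fin M → ZMod 2 :=
  fun j => if j ∈ R then 1 else 0

/-- Dot product of row `i` of `A` with the indicator vector of `R`, over GF(2). -/
def rowDot {m M : ℕ} (A : Fin m → Fin M → ZMod 2) (i : Fin m) (R : Finset (Fin M)) : ZMod 2 :=
  ∑ j, A i j * ind R j

/-- A column is free if it is not a pivot column. -/
def Free {m M : ℕ} (pivot : Fin m → Fin M) (j : Fin M) : Prop :=
  ∀ i, pivot i ≠ j

lemma rowDot_eq_sum {m M : ℕ} (A : Fin m → Fin M → ZMod 2) (i : Fin m)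
    (R : Finset (Fin M)) : rowDot A i R = ∑ j ∈ R, A i j := by
  simp [rowDot, ind, mul_ite, Finset.sum_ite_mem]

/-- Correctness of EnsMinNonViolation, part 1: added pivot rules are necessary. -/
theorem ensMinNonViolation_necessary {m M : ℕ}
    (A : Fin m → Fin M → ZMod 2) (b : Fin m → ZMod 2)
    (pivot : Fin m → Fin M)
    -- reduced row echelon form: each pivot column has a single 1, in its own row
    (hpiv : ∀ i i' : Fin m, A i (pivot i') = if i = i' then 1 else 0)
    (jmax : ℕ) (R : Finset (Fin M))
    -- R consists of free rules of index at most jmax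
    (hR : ∀ j ∈ R, Free pivot j ∧ (j : ℕ) ≤ jmax)
    (i : Fin m)
    -- residual of row i is 1
    (hres : b i - rowDot A i R = 1)
    -- boundary condition B_A[i] ≤ jmax: no free column beyond jmax is active in row i
    (hbound : ∀ j : Fin M, Free pivot j → A i j = 1 → (j : ℕ) ≤ jmax) :
    -- then pivot i is necessary: every satisfying extension of R whose new free
    -- rules all have index > jmax contains pivot i
    ∀ R'' : Finset (Fin M), R ⊆ R'' →
      (∀ i' : Fin m, rowDot A i' R'' = b i') →
      (∀ j ∈ R'', j ∉ R → Free pivot j → jmax < (j : ℕ)) →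
      pivot i ∈ R'' := by
  intro R'' hsub hsat hnew
  by_contra hpi
  have hzo : ∀ x : ZMod 2, x = 0 ∨ x = 1 := by decide
  have hdiff : ∑ j ∈ R'' \ R, A i j = 0 := by
    apply Finset.sum_eq_zero
    intro j hj
    rw [Finset.mem_sdiff] at hj
    by_cases hf : Free pivot j
    · rcases hzo (A i j) with h | h
      · exact h
      · exact absurd (hbound j hf h) (not_le.mpr (hnew j hj.1 hj.2 hf))
    · simp only [Free, not_forall, not_not] at hf
      obtain ⟨i', hi'⟩ := hf
      rw [← hi', hpiv]
      have : i ≠ i' := by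
        rintro rfl
        exact hpi (hi' ▸ hj.1)
      simp [this]
  have : rowDot A i R'' = rowDot A i R := by
    rw [rowDot_eq_sum, rowDot_eq_sum, ← Finset.sum_sdiff hsub, hdiff, zero_add]
  rw [hsat i] at this
  rw [← this] at hres
  simp at hres
end

section
/- Correctness of EnsMinNonViolation (part 2): under the same setting, every pivot rule that is necessary for R is contained in the returned set; i.e., if row i has r_i = 1 but B_A[i] > j_max, then there exists a completion of R by free rules with indices > j_max (not containing pivot[i]) that satisfies row i, so pivot[i] is not necessary. -/
open Finset

/-- Correctness of EnsMinNonViolation, part 2: if the boundary of row i exceeds jmax,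
then pivot i is not necessary — there is a completion avoiding it that satisfies row i. -/
theorem ensMinNonViolation_complete {m M : ℕ}
    (A : Fin m → Fin M → ZMod 2) (b : Fin m → ZMod 2)
    (pivot : Fin m → Fin M)
    (hpiv : ∀ i i' : Fin m, A i (pivot i') = if i = i' then 1 else 0)
    (jmax : ℕ) (R : Finset (Fin M))
    (hR : ∀ j ∈ R, Free pivot j ∧ (j : ℕ) ≤ jmax)
    (i : Fin m)
    -- residual of row i is 1
    (hres : b i - rowDot A i R = 1)
    -- boundary condition B_A[i] > jmax: some free column beyond jmax is active in row i
    (hbound : ∃ j : Fin M, Free pivot j ∧ jmax < (j : ℕ) ∧ A i j = 1) :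
    ∃ R'' : Finset (Fin M), R ⊆ R'' ∧
      (∀ j ∈ R'', j ∉ R → Free pivot j ∧ jmax < (j : ℕ)) ∧
      pivot i ∉ R'' ∧
      rowDot A i R'' = b i := by
  obtain ⟨j, hjf, hjg, hAij⟩ := hbound
  have hjR : j ∉ R := fun h => absurd (hR j h).2 (by omega)
  refine ⟨insert j R, Finset.subset_insert _ _, ?_, ?_, ?_⟩
  · intro k hk hkR
    rcases Finset.mem_insert.mp hk with h | h
    · exact h ▸ ⟨hjf, hjg⟩
    · exact absurd h hkR
  · intro h
    rcases Finset.mem_insert.mp h with h | h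
    · exact hjf i h
    · exact (hR _ h).1 i rfl
  · have hind : ∀ k, ind (insert j R) k = ind R k + (if k = j then 1 else 0) := by
      intro k
      by_cases hk : k = j
      · subst hk; simp [ind, hjR]
      · simp [ind, Finset.mem_insert, hk]
    have : rowDot A i (insert j R) = rowDot A i R + A i j := by
      unfold rowDot
      simp only [hind, mul_add]
      rw [Finset.sum_add_distrib]
      congr 1
      simp [Finset.mul_sum, Finset.sum_ite_eq']
    rw [this, hAij]
    have h2 : (1 : ZMod 2) + 1 = 0 := by decide
    linear_combination -hres
end

section
/- Pivot set monotonicity: in a GF(2) parity system in reduced row echelon form, if R ⊆ R' are free-rule sets with max indices j_max < j'_max respectively activated, and R' contains no free rule with index ≤ j_max other than those in R, then the necessary pivot set of R is contained in the necessary pivot set of R'. -/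
open Finset
open scoped Classical

/-- Necessary pivot set of a rule set `R` with active prefix bound `jmax`. -/
noncomputable def necPivots {m M : ℕ} (A : Fin m → Fin M → ZMod 2) (b : Fin m → ZMod 2)
    (pivot : Fin m → Fin M) (jmax : ℕ) (R : Finset (Fin M)) : Finset (Fin M) :=
  (Finset.univ.filter (fun i : Fin m =>
      rowDot A i R ≠ b i ∧
      ∀ j : Fin M, Free pivot j → A i j = 1 → (j : ℕ) ≤ jmax)).image pivot

/-- Pivot set monotonicity. -/
theorem pivot_set_monotone {m M : ℕ}
    (A : Fin m → Fin M → ZMod 2) (b : Fin m → ZMod 2)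
    (pivot : Fin m → Fin M)
    (hpiv : ∀ i i' : Fin m, A i (pivot i') = if i = i' then 1 else 0)
    (jmax jmax' : ℕ) (hj : jmax < jmax')
    (R R' : Finset (Fin M)) (hsub : R ⊆ R')
    (hR : ∀ j ∈ R, Free pivot j ∧ (j : ℕ) ≤ jmax)
    (hR' : ∀ j ∈ R', Free pivot j ∧ (j : ℕ) ≤ jmax')
    -- R' contains no free rule of index ≤ jmax other than those in R
    (hnew : ∀ j ∈ R', j ∉ R → jmax < (j : ℕ)) :
    necPivots A b pivot jmax R ⊆ necPivots A b pivot jmax' R' := by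
  intro p hp
  simp only [necPivots, Finset.mem_image, Finset.mem_filter, Finset.mem_univ, true_and] at hp ⊢
  obtain ⟨i, ⟨hne, hbd⟩, rfl⟩ := hp
  refine ⟨i, ⟨?_, fun j hf hA => le_trans (hbd j hf hA) hj.le⟩, rfl⟩
  have hdot : rowDot A i R' = rowDot A i R := by
    unfold rowDot
    apply Finset.sum_congr rfl
    intro j _
    by_cases hjR : j ∈ R
    · simp [ind, hjR, hsub hjR]
    · by_cases hjR' : j ∈ R'
      · have hfree := (hR' j hjR').1
        have hgt := hnew j hjR' hjR
        have : A i j = 0 := by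
          rcases (by decide : ∀ x : ZMod 2, x = 0 ∨ x = 1) (A i j) with h | h
          · exact h
          · exact absurd (hbd j hfree h) (not_le.mpr hgt)
        simp [this]
      · simp [ind, hjR, hjR']
  rw [hdot]; exact hne
end
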